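/- Let E : ℝ^d → ℝ be nonnegative and differentiable with Lipschitz continuous gradient, let ν > 0, ε > 0, and fix u⁰ ∈ ℝ^d. Suppose u ∈ C¹([0,∞); ℝ^d) with u(0) = u⁰ satisfies W^ε(u) ≤ W^ε(v) for every v ∈ C¹([0,∞); ℝ^d) with v(0) = u⁰. Then for every T ≥ 0 one has ∫_0^T E(u(t)) dt ≤ E(u⁰)(T + ε). -/

import Mathlib

/-- The parabolic infinite-horizon WIDE functional
`W^ε(v) = ∫_0^∞ e^{-t/ε} ((εν/2)|v'|² + E(v)) dt`, with values in `[0,∞]`;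
the derivative is taken within `[0,∞)`. -/
noncomputable def parabolicWideFunctional (d : ℕ) (E : EuclideanSpace ℝ (Fin d) → ℝ)
    (ν ε : ℝ) (v : ℝ → EuclideanSpace ℝ (Fin d)) : ENNReal :=
  ∫⁻ t in Set.Ioi (0 : ℝ), ENNReal.ofReal (Real.exp (-t / ε) *
    ((ε * ν / 2) * ‖derivWithin v (Set.Ici 0) t‖ ^ 2 + E (v t)))

open Real MeasureTheory Set Filter Topology

/-!
Comparing the minimizer `u` with the reparametrized curves `u ∘ softMin s δ`, where `softMin s δ`
is a smooth approximation of `t ↦ min t s`, and letting `δ → 0` gives the dynamic programming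
inequality `∫_s^∞ e^{-t/ε} E(u t) dt ≤ ε e^{-s/ε} E(u s)`: after time `s` the minimizer does no
better than stopping at `u s`. For `D(r) = e^{r/ε} ∫_r^∞ e^{-t/ε} E(u t) dt` this says
`D ≤ ε E ∘ u`, while `D' = D/ε - E ∘ u ≤ 0`. Hence `D ≤ D(0) ≤ ε E(u⁰)` on `[0, ∞)`, and
integrating `E ∘ u = D/ε - D'` over `[0, T]` gives
`∫_0^T E(u t) dt ≤ T E(u⁰) + D(0) - D(T) ≤ E(u⁰)(T + ε)`.
-/

section ExpIntegrals

variable {ε : ℝ}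

lemma integrableOn_exp_neg_div_Ioi (hε : 0 < ε) (s : ℝ) :
    IntegrableOn (fun t => exp (-t / ε)) (Ioi s) := by
  simpa [neg_div, div_eq_inv_mul] using integrableOn_exp_mul_Ioi (neg_lt_zero.2 (inv_pos.2 hε)) s

lemma integral_exp_neg_div_Ioi (hε : 0 < ε) (s : ℝ) :
    ∫ t in Ioi s, exp (-t / ε) = ε * exp (-s / ε) := by
  have := integral_exp_mul_Ioi (neg_lt_zero.2 (inv_pos.2 hε)) s
  simp only [neg_mul, ← neg_div, ← div_eq_inv_mul] at this
  rw [this]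
  field_simp

lemma lintegral_ofReal_exp_neg_div_mul_Ioi (hε : 0 < ε) {c : ℝ} (hc : 0 ≤ c) (s : ℝ) :
    ∫⁻ t in Ioi s, ENNReal.ofReal (exp (-t / ε) * c) = ENNReal.ofReal (ε * exp (-s / ε) * c) := by
  rw [← ofReal_integral_eq_lintegral_ofReal ((integrableOn_exp_neg_div_Ioi hε s).mul_const c)
    (Eventually.of_forall fun t => by positivity), integral_mul_const, integral_exp_neg_div_Ioi hε]

end ExpIntegrals

lemma max_le_log_one_add_exp (x : ℝ) : max x 0 ≤ log (1 + exp x) := by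
  refine max_le ?_ (log_nonneg (by linarith [exp_pos x]))
  calc x = log (exp x) := (log_exp x).symm
    _ ≤ log (1 + exp x) := log_le_log (exp_pos x) (by linarith)

lemma log_one_add_exp_le (x : ℝ) : log (1 + exp x) ≤ max x 0 + log 2 := by
  have h : 1 + exp x ≤ 2 * exp (max x 0) := by
    have h1 : 1 ≤ exp (max x 0) := one_le_exp (le_max_right x 0)
    have h2 : exp x ≤ exp (max x 0) := exp_le_exp.2 (le_max_left x 0)
    linarith
  calc log (1 + exp x) ≤ log (2 * exp (max x 0)) := log_le_log (by positivity) h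
    _ = max x 0 + log 2 := by rw [log_mul two_ne_zero (exp_ne_zero _), log_exp, add_comm]

/-- `δ * log (1 + exp (x / δ))` is a smooth `max x 0`, so this is a smooth `min t s`,
shifted to vanish at `0`. -/
noncomputable def softMin (s δ t : ℝ) : ℝ :=
  t - δ * (log (1 + exp ((t - s) / δ)) - log (1 + exp (-s / δ)))

section SoftMin

variable {s δ : ℝ}

lemma hasDerivAt_softMin (hδ : δ ≠ 0) (t : ℝ) :
    HasDerivAt (softMin s δ) (1 + exp ((t - s) / δ))⁻¹ t := by
  have hexp : HasDerivAt (fun t => 1 + exp ((t - s) / δ)) (exp ((t - s) / δ) / δ) t := by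
    simpa [div_eq_mul_inv] using (((hasDerivAt_id t).sub_const s).div_const δ).exp.const_add 1
  refine ((hasDerivAt_id' t).sub
    (((hexp.log (by positivity)).sub_const (log (1 + exp (-s / δ)))).const_mul δ)).congr_deriv ?_
  field_simp
  ring

lemma contDiff_softMin : ContDiff ℝ 1 (softMin s δ) := by
  unfold softMin
  fun_prop (disch := intro; positivity)

lemma softMin_zero : softMin s δ 0 = 0 := by
  simp [softMin]

lemma softMin_nonneg (hδ : 0 < δ) {t : ℝ} (ht : 0 ≤ t) : 0 ≤ softMin s δ t := by
  have hmono : Monotone (softMin s δ) := monotone_of_hasDerivAt_nonneg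
    (hasDerivAt_softMin hδ.ne') (fun t => by positivity)
  simpa [softMin_zero] using hmono ht

lemma abs_softMin_sub_min_le (hδ : 0 < δ) (hs : 0 ≤ s) (t : ℝ) :
    |softMin s δ t - min t s| ≤ δ * log 2 := by
  have hx : δ * max ((t - s) / δ) 0 = t - min t s := by
    rw [mul_max_of_nonneg _ _ hδ.le, mul_div_cancel₀ _ hδ.ne', mul_zero]
    rcases le_total t s with h | h <;> simp [h]
  have hy : max (-s / δ) 0 = 0 :=
    max_eq_right (div_nonpos_of_nonpos_of_nonneg (by linarith) hδ.le)
  have h1 := mul_le_mul_of_nonneg_left (max_le_log_one_add_exp ((t - s) / δ)) hδ.le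
  have h2 := mul_le_mul_of_nonneg_left (log_one_add_exp_le ((t - s) / δ)) hδ.le
  have h3 := mul_le_mul_of_nonneg_left (max_le_log_one_add_exp (-s / δ)) hδ.le
  have h4 := mul_le_mul_of_nonneg_left (log_one_add_exp_le (-s / δ)) hδ.le
  rw [hy] at h3 h4
  unfold softMin
  rw [abs_le]
  constructor <;> linarith

lemma softMin_le (hδ : 0 < δ) (hs : 0 ≤ s) (t : ℝ) : softMin s δ t ≤ s + δ * log 2 := by
  linarith [le_abs_self (softMin s δ t - min t s), abs_softMin_sub_min_le hδ hs t, min_le_right t s]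

lemma tendsto_softMin (hs : 0 ≤ s) (t : ℝ) :
    Tendsto (fun δ => softMin s δ t) (𝓝[>] 0) (𝓝 (min t s)) := by
  rw [tendsto_iff_norm_sub_tendsto_zero]
  have hlim : Tendsto (fun δ => δ * log 2) (𝓝[>] 0) (𝓝 0) := by
    simpa using (tendsto_nhdsWithin_of_tendsto_nhds (tendsto_id (x := 𝓝 (0:ℝ)))).mul_const (log 2)
  refine squeeze_zero' (Eventually.of_forall fun δ => norm_nonneg _) ?_ hlim
  filter_upwards [self_mem_nhdsWithin] with δ hδ
  exact abs_softMin_sub_min_le hδ hs t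

lemma tendsto_inv_one_add_exp_div_of_neg {x : ℝ} (hx : x < 0) :
    Tendsto (fun δ => (1 + exp (x / δ))⁻¹) (𝓝[>] 0) (𝓝 1) := by
  have h : Tendsto (fun δ => x / δ) (𝓝[>] 0) atBot := by
    simpa [div_eq_mul_inv] using tendsto_inv_nhdsGT_zero.const_mul_atTop_of_neg hx
  simpa using ((tendsto_exp_atBot.comp h).const_add 1).inv₀ (by norm_num)

lemma tendsto_inv_one_add_exp_div_of_pos {x : ℝ} (hx : 0 < x) :
    Tendsto (fun δ => (1 + exp (x / δ))⁻¹) (𝓝[>] 0) (𝓝 0) := by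
  have h : Tendsto (fun δ => x / δ) (𝓝[>] 0) atTop := by
    simpa [div_eq_mul_inv] using tendsto_inv_nhdsGT_zero.const_mul_atTop hx
  exact (tendsto_atTop_add_const_left _ 1 (tendsto_exp_atTop.comp h)).inv_tendsto_atTop

end SoftMin

noncomputable def wideLagrangian (d : ℕ) (E : EuclideanSpace ℝ (Fin d) → ℝ) (ν ε : ℝ)
    (v : ℝ → EuclideanSpace ℝ (Fin d)) (t : ℝ) : ℝ :=
  exp (-t / ε) * ((ε * ν / 2) * ‖derivWithin v (Ici 0) t‖ ^ 2 + E (v t))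

section Lagrangian

variable {d : ℕ} {E : EuclideanSpace ℝ (Fin d) → ℝ} {ν ε s δ : ℝ}
  {u v : ℝ → EuclideanSpace ℝ (Fin d)}

lemma parabolicWideFunctional_eq_lintegral (v : ℝ → EuclideanSpace ℝ (Fin d)) :
    parabolicWideFunctional d E ν ε v =
      ∫⁻ t in Ioi 0, ENNReal.ofReal (wideLagrangian d E ν ε v t) := rfl

lemma continuousOn_wideLagrangian (hE : Continuous E) (hv : ContDiffOn ℝ 1 v (Ici 0)) :
    ContinuousOn (wideLagrangian d E ν ε v) (Ici 0) := by
  have hv' := hv.continuousOn_derivWithin (uniqueDiffOn_Ici 0) le_rfl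
  exact (continuous_exp.comp (continuous_neg.div_const ε)).continuousOn.mul
    ((continuousOn_const.mul (hv'.norm.pow 2)).add (hE.comp_continuousOn hv.continuousOn))

lemma wideLagrangian_comp_softMin (hu : DifferentiableOn ℝ u (Ici 0)) (hδ : 0 < δ) {t : ℝ}
    (ht : 0 ≤ t) :
    wideLagrangian d E ν ε (u ∘ softMin s δ) t = exp (-t / ε) * ((ε * ν / 2) *
      ((1 + exp ((t - s) / δ))⁻¹ * ‖derivWithin u (Ici 0) (softMin s δ t)‖) ^ 2 +
        E (u (softMin s δ t))) := by
  have hmaps : MapsTo (softMin s δ) (Ici 0) (Ici 0) := fun t ht => softMin_nonneg hδ ht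
  have hderiv := ((hu _ (hmaps ht)).hasDerivWithinAt).scomp t
    (hasDerivAt_softMin hδ.ne' t).hasDerivWithinAt hmaps
  rw [wideLagrangian, hderiv.derivWithin (uniqueDiffOn_Ici 0 t ht), norm_smul,
    Real.norm_of_nonneg (by positivity)]
  rfl

lemma tendsto_wideLagrangian_comp_softMin (hE : Continuous E) (hu : ContDiffOn ℝ 1 u (Ici 0))
    (hs : 0 ≤ s) {t : ℝ} (ht : 0 ≤ t) (hts : t ≠ s) :
    Tendsto (fun δ => wideLagrangian d E ν ε (u ∘ softMin s δ) t) (𝓝[>] 0)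
      (𝓝 (if t ≤ s then wideLagrangian d E ν ε u t else exp (-t / ε) * E (u s))) := by
  have hη : Tendsto (fun δ => softMin s δ t) (𝓝[>] 0) (𝓝[Ici 0] (min t s)) :=
    tendsto_nhdsWithin_iff.2 ⟨tendsto_softMin hs t, eventually_nhdsWithin_of_forall
      fun δ hδ => softMin_nonneg hδ ht⟩
  have hts_mem : min t s ∈ Ici 0 := le_min ht hs
  have hu' := (hu.continuousOn_derivWithin (uniqueDiffOn_Ici 0) le_rfl _ hts_mem).tendsto.comp hη
  have hEu := (hE.tendsto _).comp ((hu.continuousOn _ hts_mem).tendsto.comp hη)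
  have hσ : Tendsto (fun δ => (1 + exp ((t - s) / δ))⁻¹) (𝓝[>] 0)
      (𝓝 (if t ≤ s then 1 else 0)) := by
    rcases hts.lt_or_gt with h | h
    · simpa [h.le] using tendsto_inv_one_add_exp_div_of_neg (sub_neg.2 h)
    · simpa [not_le.2 h] using tendsto_inv_one_add_exp_div_of_pos (sub_pos.2 h)
  have hlim := (tendsto_const_nhds (x := exp (-t / ε))).mul
    (((tendsto_const_nhds (x := ε * ν / 2)).mul ((hσ.mul hu'.norm).pow 2)).add hEu)
  refine (hlim.congr' ?_).trans_eq ?_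
  · filter_upwards [self_mem_nhdsWithin] with δ hδ
    exact (wideLagrangian_comp_softMin hu.differentiableOn_one hδ ht).symm
  · split_ifs with h
    · simp [wideLagrangian, min_eq_left h]
    · simp [min_eq_right (not_le.1 h).le]

lemma contDiffOn_comp_softMin (hu : ContDiffOn ℝ 1 u (Ici 0)) (hδ : 0 < δ) :
    ContDiffOn ℝ 1 (u ∘ softMin s δ) (Ici 0) :=
  hu.comp contDiff_softMin.contDiffOn fun _ ht => softMin_nonneg hδ ht

lemma exists_wideLagrangian_comp_softMin_le (hE : Continuous E) (hu : ContDiffOn ℝ 1 u (Ici 0))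
    (hs : 0 ≤ s) : ∃ C, 0 ≤ C ∧ ∀ δ ∈ Ioc 0 1, ∀ t ∈ Ici 0,
      wideLagrangian d E ν ε (u ∘ softMin s δ) t ≤ exp (-t / ε) * C := by
  have hK : Icc 0 (s + 1) ⊆ Ici 0 := Icc_subset_Ici_self
  obtain ⟨C₁, hC₁⟩ := isCompact_Icc.exists_bound_of_continuousOn
    ((hu.continuousOn_derivWithin (uniqueDiffOn_Ici 0) le_rfl).mono hK)
  obtain ⟨C₂, hC₂⟩ := isCompact_Icc.exists_bound_of_continuousOn
    ((hE.comp_continuousOn hu.continuousOn).mono hK)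
  have hC₂_nonneg : 0 ≤ C₂ := (norm_nonneg _).trans (hC₂ 0 ⟨le_rfl, by linarith⟩)
  refine ⟨|ε * ν / 2| * C₁ ^ 2 + C₂, by positivity, fun δ hδ t ht => ?_⟩
  have hlog : δ * log 2 ≤ 1 :=
    mul_le_one₀ hδ.2 (log_nonneg one_le_two) (log_two_lt_d9.le.trans (by norm_num))
  have hr : softMin s δ t ∈ Icc 0 (s + 1) :=
    ⟨softMin_nonneg hδ.1 ht, (softMin_le hδ.1 hs t).trans (by linarith)⟩
  have hσ : (1 + exp ((t - s) / δ))⁻¹ ≤ 1 :=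
    inv_le_one_of_one_le₀ (by linarith [exp_pos ((t - s) / δ)])
  have hderiv :
      ((1 + exp ((t - s) / δ))⁻¹ * ‖derivWithin u (Ici 0) (softMin s δ t)‖) ^ 2 ≤ C₁ ^ 2 :=
    pow_le_pow_left₀ (by positivity)
      ((mul_le_of_le_one_left (norm_nonneg _) hσ).trans (hC₁ _ hr)) 2
  have hkinetic := (mul_le_mul_of_nonneg_right (le_abs_self (ε * ν / 2)) (sq_nonneg _)).trans
    (mul_le_mul_of_nonneg_left hderiv (abs_nonneg _))
  have hpotential : E (u (softMin s δ t)) ≤ C₂ := (le_abs_self _).trans (hC₂ _ hr)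
  rw [wideLagrangian_comp_softMin hu.differentiableOn_one hδ.1 ht]
  exact mul_le_mul_of_nonneg_left (add_le_add hkinetic hpotential) (exp_pos _).le

lemma tendsto_parabolicWideFunctional_comp_softMin (hE : Continuous E)
    (hu : ContDiffOn ℝ 1 u (Ici 0)) (hε : 0 < ε) (hs : 0 ≤ s) :
    Tendsto (fun δ => parabolicWideFunctional d E ν ε (u ∘ softMin s δ)) (𝓝[>] 0)
      (𝓝 ((∫⁻ t in Ioc 0 s, ENNReal.ofReal (wideLagrangian d E ν ε u t)) +
        ∫⁻ t in Ioi s, ENNReal.ofReal (exp (-t / ε) * E (u s)))) := by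
  obtain ⟨C, hC_nonneg, hC⟩ := exists_wideLagrangian_comp_softMin_le (ν := ν) (ε := ε) hE hu hs
  have hsplit : (∫⁻ t in Ioc 0 s, ENNReal.ofReal (wideLagrangian d E ν ε u t)) +
      ∫⁻ t in Ioi s, ENNReal.ofReal (exp (-t / ε) * E (u s)) =
      ∫⁻ t in Ioi 0, ENNReal.ofReal
        (if t ≤ s then wideLagrangian d E ν ε u t else exp (-t / ε) * E (u s)) := by
    rw [← Ioc_union_Ioi_eq_Ioi hs, lintegral_union measurableSet_Ioi (Ioc_disjoint_Ioi le_rfl)]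
    congr 1
    · exact setLIntegral_congr_fun measurableSet_Ioc fun t ht => by simp [ht.2]
    · exact setLIntegral_congr_fun measurableSet_Ioi fun t (ht : s < t) => by simp [not_le.2 ht]
  rw [hsplit]
  refine tendsto_lintegral_filter_of_dominated_convergence'
    (fun t => ENNReal.ofReal (exp (-t / ε) * C)) ?_ ?_ ?_ ?_
  · filter_upwards [self_mem_nhdsWithin] with δ hδ
    exact (((continuousOn_wideLagrangian hE (contDiffOn_comp_softMin hu hδ)).mono
      Ioi_subset_Ici_self).aemeasurable measurableSet_Ioi).ennreal_ofReal
  · filter_upwards [Ioc_mem_nhdsGT zero_lt_one] with δ hδ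
    exact ae_restrict_of_forall_mem measurableSet_Ioi fun t ht =>
      ENNReal.ofReal_le_ofReal (hC δ hδ t (Ioi_subset_Ici_self ht))
  · rw [lintegral_ofReal_exp_neg_div_mul_Ioi hε hC_nonneg]
    exact ENNReal.ofReal_ne_top
  · filter_upwards [ae_restrict_mem measurableSet_Ioi, Measure.ae_ne _ s] with t ht hts
    exact (ENNReal.continuous_ofReal.tendsto _).comp
      (tendsto_wideLagrangian_comp_softMin hE hu hs (Ioi_subset_Ici_self ht) hts)

end Lagrangian

lemma integrable_and_integral_le_of_lintegral_ofReal_le {α : Type*} [MeasurableSpace α]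
    {μ : Measure α} {f : α → ℝ} {C : ℝ} (hC : 0 ≤ C) (hf_nonneg : 0 ≤ᵐ[μ] f)
    (hf : AEStronglyMeasurable f μ) (h : ∫⁻ x, ENNReal.ofReal (f x) ∂μ ≤ ENNReal.ofReal C) :
    Integrable f μ ∧ ∫ x, f x ∂μ ≤ C :=
  ⟨⟨hf, (hasFiniteIntegral_iff_ofReal hf_nonneg).2 (h.trans_lt ENNReal.ofReal_lt_top)⟩,
    (integral_eq_lintegral_of_nonneg_ae hf_nonneg hf).trans_le
      (ENNReal.toReal_le_of_le_ofReal hC h)⟩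

lemma hasDerivAt_integral_Ioi {f : ℝ → ℝ} {a b : ℝ} (hf : IntegrableOn f (Ioi a)) (hab : a < b)
    (hfb : ContinuousAt f b) : HasDerivAt (fun r => ∫ t in Ioi r, f t) (-f b) b := by
  have hprim := intervalIntegral.integral_hasDerivAt_right
    ((intervalIntegrable_iff_integrableOn_Ioc_of_le hab.le).2 (hf.mono_set Ioc_subset_Ioi_self))
    (AEStronglyMeasurable.stronglyMeasurableAtFilter_of_mem hf.aestronglyMeasurable
      (Ioi_mem_nhds hab)) hfb
  refine (hprim.const_sub (∫ t in Ioi a, f t)).congr_of_eventuallyEq ?_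
  filter_upwards [Ioi_mem_nhds hab] with r hr
  rw [← intervalIntegral.integral_Ioi_sub_Ioi hf (le_of_lt hr), sub_sub_cancel]

noncomputable def discountedTail (ε : ℝ) (g : ℝ → ℝ) (r : ℝ) : ℝ :=
  exp (r / ε) * ∫ t in Ioi r, exp (-t / ε) * g t

section DiscountedTail

variable {g : ℝ → ℝ} {ε : ℝ}

lemma continuousOn_discountedTail (hint : IntegrableOn (fun t => exp (-t / ε) * g t) (Ioi 0)) :
    ContinuousOn (discountedTail ε g) (Ici 0) :=
  (continuous_exp.comp (continuous_id.div_const ε)).continuousOn.mul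
    hint.continuousOn_Ici_primitive_Ioi

lemma hasDerivAt_discountedTail (hg : ContinuousOn g (Ici 0))
    (hint : IntegrableOn (fun t => exp (-t / ε) * g t) (Ioi 0)) {r : ℝ} (hr : 0 < r) :
    HasDerivAt (discountedTail ε g) (discountedTail ε g r / ε - g r) r := by
  have hgr : ContinuousAt g r := hg.continuousAt (Ici_mem_nhds hr)
  refine (((hasDerivAt_id r).div_const ε).exp.mul (hasDerivAt_integral_Ioi hint hr
    ((continuous_exp.comp (continuous_neg.div_const ε)).continuousAt.mul hgr))).congr_deriv ?_
  simp only [discountedTail, id, mul_neg, ← mul_assoc, ← exp_add, neg_div, add_neg_cancel,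
    exp_zero, one_mul]
  ring

lemma discountedTail_le_iff {r c : ℝ} :
    discountedTail ε g r ≤ ε * c ↔ ∫ t in Ioi r, exp (-t / ε) * g t ≤ ε * exp (-r / ε) * c := by
  rw [discountedTail, ← le_div_iff₀' (exp_pos _), neg_div, exp_neg]
  ring_nf

lemma antitoneOn_discountedTail (hε : 0 < ε) (hg : ContinuousOn g (Ici 0))
    (hint : IntegrableOn (fun t => exp (-t / ε) * g t) (Ioi 0))
    (hle : ∀ r ∈ Ioi 0, discountedTail ε g r ≤ ε * g r) :
    AntitoneOn (discountedTail ε g) (Ici 0) := by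
  refine antitoneOn_of_deriv_nonpos (convex_Ici 0) (continuousOn_discountedTail hint)
    (fun r hr => ?_) (fun r hr => ?_) <;> rw [interior_Ici] at hr
  · exact (hasDerivAt_discountedTail hg hint hr).differentiableAt.differentiableWithinAt
  · rw [(hasDerivAt_discountedTail hg hint hr).deriv, sub_nonpos, div_le_iff₀ hε, mul_comm]
    exact hle r hr

lemma discountedTail_nonneg (hg_nonneg : ∀ t ∈ Ici 0, 0 ≤ g t) {r : ℝ} (hr : 0 ≤ r) :
    0 ≤ discountedTail ε g r :=
  mul_nonneg (exp_pos _).le (setIntegral_nonneg measurableSet_Ioi fun t ht =>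
    mul_nonneg (exp_pos _).le (hg_nonneg t (Ioi_subset_Ici hr ht)))

theorem integral_le_mul_add_of_lintegral_Ioi_le (hε : 0 < ε) (hg : ContinuousOn g (Ici 0))
    (hg_nonneg : ∀ t ∈ Ici 0, 0 ≤ g t)
    (htail : ∀ r ∈ Ici 0, ∫⁻ t in Ioi r, ENNReal.ofReal (exp (-t / ε) * g t) ≤
      ENNReal.ofReal (ε * exp (-r / ε) * g r)) {T : ℝ} (hT : 0 ≤ T) :
    ∫ t in 0..T, g t ≤ g 0 * (T + ε) := by
  have hf : ContinuousOn (fun t => exp (-t / ε) * g t) (Ici 0) :=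
    (continuous_exp.comp (continuous_neg.div_const ε)).continuousOn.mul hg
  have htail' : ∀ r ∈ Ici (0 : ℝ), IntegrableOn (fun t => exp (-t / ε) * g t) (Ioi r) ∧
      ∫ t in Ioi r, exp (-t / ε) * g t ≤ ε * exp (-r / ε) * g r := fun r hr =>
    integrable_and_integral_le_of_lintegral_ofReal_le
      (mul_nonneg (by positivity) (hg_nonneg r hr))
      (ae_restrict_of_forall_mem measurableSet_Ioi fun t ht =>
        mul_nonneg (exp_pos _).le (hg_nonneg t (Ioi_subset_Ici hr ht)))
      ((hf.mono (Ioi_subset_Ici hr)).aestronglyMeasurable measurableSet_Ioi) (htail r hr)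
  have hint := (htail' 0 self_mem_Ici).1
  have hle : ∀ r ∈ Ici 0, discountedTail ε g r ≤ ε * g r := fun r hr =>
    discountedTail_le_iff.2 (htail' r hr).2
  have hanti := antitoneOn_discountedTail hε hg hint fun r hr => hle r (Ioi_subset_Ici_self hr)
  have hcont := continuousOn_discountedTail hint
  have hDint : IntervalIntegrable (fun t => discountedTail ε g t / ε) volume 0 T :=
    ((hcont.div_const ε).mono Icc_subset_Ici_self).intervalIntegrable_of_Icc hT
  have hgint : IntervalIntegrable g volume 0 T :=
    (hg.mono Icc_subset_Ici_self).intervalIntegrable_of_Icc hT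
  have hFTC : ∫ t in 0..T, (discountedTail ε g t / ε - g t) =
      discountedTail ε g T - discountedTail ε g 0 :=
    intervalIntegral.integral_eq_sub_of_hasDerivAt_of_le hT (hcont.mono Icc_subset_Ici_self)
      (fun t ht => hasDerivAt_discountedTail hg hint ht.1) (hDint.sub hgint)
  have hmean : ∫ t in 0..T, discountedTail ε g t / ε ≤ T * g 0 := by
    have hbound : ∀ t ∈ Icc 0 T, discountedTail ε g t / ε ≤ g 0 := fun t ht =>
      (div_le_iff₀' hε).2 ((hanti self_mem_Ici ht.1 ht.1).trans (hle 0 self_mem_Ici))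
    simpa using intervalIntegral.integral_mono_on hT hDint intervalIntegrable_const hbound
  rw [intervalIntegral.integral_sub hDint hgint] at hFTC
  linarith [hle 0 self_mem_Ici, discountedTail_nonneg (ε := ε) hg_nonneg hT]

end DiscountedTail

section Minimizer

variable {d : ℕ} {E : EuclideanSpace ℝ (Fin d) → ℝ} {ν : ℝ} {a : EuclideanSpace ℝ (Fin d)}
  {u : ℝ → EuclideanSpace ℝ (Fin d)} {ε s : ℝ}

theorem lintegral_Ioi_wideLagrangian_le (hE : Continuous E) (hEnn : ∀ x, 0 ≤ E x) (hε : 0 < ε)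
    (hu : ContDiffOn ℝ 1 u (Ici 0)) (hu0 : u 0 = a)
    (hmin : ∀ v : ℝ → EuclideanSpace ℝ (Fin d), ContDiffOn ℝ 1 v (Ici 0) → v 0 = a →
      parabolicWideFunctional d E ν ε u ≤ parabolicWideFunctional d E ν ε v)
    (hs : 0 ≤ s) :
    ∫⁻ t in Ioi s, ENNReal.ofReal (wideLagrangian d E ν ε u t) ≤
      ENNReal.ofReal (ε * exp (-s / ε) * E (u s)) := by
  have hle := ge_of_tendsto (tendsto_parabolicWideFunctional_comp_softMin hE hu hε hs) (by
    filter_upwards [self_mem_nhdsWithin] with δ hδ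
    exact hmin _ (contDiffOn_comp_softMin hu hδ) (by simp [softMin_zero, hu0]))
  rw [parabolicWideFunctional_eq_lintegral, ← Ioc_union_Ioi_eq_Ioi hs,
    lintegral_union measurableSet_Ioi (Ioc_disjoint_Ioi le_rfl)] at hle
  have hint : IntegrableOn (wideLagrangian d E ν ε u) (Icc 0 s) :=
    ((continuousOn_wideLagrangian hE hu).mono Icc_subset_Ici_self).integrableOn_Icc
  have hfin := (hint.mono_set Ioc_subset_Icc_self).lintegral_lt_top
  rw [← lintegral_ofReal_exp_neg_div_mul_Ioi hε (hEnn _)]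
  exact ENNReal.le_of_add_le_add_left hfin.ne hle

theorem lintegral_Ioi_energy_le (hE : Continuous E) (hEnn : ∀ x, 0 ≤ E x) (hε : 0 < ε)
    (hν : 0 ≤ ν) (hu : ContDiffOn ℝ 1 u (Ici 0)) (hu0 : u 0 = a)
    (hmin : ∀ v : ℝ → EuclideanSpace ℝ (Fin d), ContDiffOn ℝ 1 v (Ici 0) → v 0 = a →
      parabolicWideFunctional d E ν ε u ≤ parabolicWideFunctional d E ν ε v)
    (hs : 0 ≤ s) :
    ∫⁻ t in Ioi s, ENNReal.ofReal (exp (-t / ε) * E (u t)) ≤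
      ENNReal.ofReal (ε * exp (-s / ε) * E (u s)) :=
  (setLIntegral_mono' measurableSet_Ioi fun t _ => ENNReal.ofReal_le_ofReal
    (mul_le_mul_of_nonneg_left (le_add_of_nonneg_left (by positivity)) (exp_pos _).le)).trans
    (lintegral_Ioi_wideLagrangian_le hE hEnn hε hu hu0 hmin hs)

end Minimizer

theorem wide_dynamic_programming_energy_estimate (d : ℕ)
    (E : EuclideanSpace ℝ (Fin d) → ℝ) (hEdiff : Differentiable ℝ E)
    (hEnn : ∀ x, 0 ≤ E x)
    (ν ε : ℝ) (hν : 0 < ν) (hε : 0 < ε)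
    (a : EuclideanSpace ℝ (Fin d)) (u : ℝ → EuclideanSpace ℝ (Fin d))
    (hu : ContDiffOn ℝ 1 u (Set.Ici 0)) (hu0 : u 0 = a)
    (hmin : ∀ v : ℝ → EuclideanSpace ℝ (Fin d), ContDiffOn ℝ 1 v (Set.Ici 0) → v 0 = a →
      parabolicWideFunctional d E ν ε u ≤ parabolicWideFunctional d E ν ε v) :
    ∀ T : ℝ, 0 ≤ T → (∫ t in (0 : ℝ)..T, E (u t)) ≤ E a * (T + ε) := by
  intro T hT
  have hE : Continuous E := hEdiff.continuous
  have henergy := fun r (hr : r ∈ Ici (0 : ℝ)) =>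
    lintegral_Ioi_energy_le hE hEnn hε hν.le hu hu0 hmin hr
  simpa only [Function.comp_apply, hu0] using integral_le_mul_add_of_lintegral_Ioi_le hε
    (hE.comp_continuousOn hu.continuousOn) (fun t _ => hEnn (u t)) henergy hT
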